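/- Let n ≥ 2 be an integer and let 0 < H ≤ (n-1)/n. Then M_{H,0}(t) > 0 and P_{H,0}(t) > 0 for all t > 0, and the function Q_{H,0} is strictly increasing on (0, ∞); equivalently, the height function λ(ρ) := ∫₀^{ρ} Q_{H,0}(t) dt of the rotation H-hypersurface with d = 0 is strictly convex on (0, ∞). -/

import Mathlib

open Filter Topology

/-- `Ifun m t = ∫₀ᵗ sinh^m(r) dr`. -/
noncomputable def Ifun (m : ℕ) (t : ℝ) : ℝ := ∫ r in (0:ℝ)..t, Real.sinh r ^ m

/-- `Mfun n H d t = sinh^{n-1}(t) − nH·I_{n-1}(t) − d`. -/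
noncomputable def Mfun (n : ℕ) (H d t : ℝ) : ℝ :=
  Real.sinh t ^ (n - 1) - n * H * Ifun (n - 1) t - d

/-- `Pfun n H d t = sinh^{n-1}(t) + nH·I_{n-1}(t) + d`. -/
noncomputable def Pfun (n : ℕ) (H d t : ℝ) : ℝ :=
  Real.sinh t ^ (n - 1) + n * H * Ifun (n - 1) t + d

/-- `Qfun n H d t = (nH·I_{n-1}(t) + d)/√(M·P)`. -/
noncomputable def Qfun (n : ℕ) (H d t : ℝ) : ℝ :=
  (n * H * Ifun (n - 1) t + d) / Real.sqrt (Mfun n H d t * Pfun n H d t)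

/-!
Write `m = n - 1` and `c = nH ≤ m`. Everything rests on the inequality
`m cosh t · I_m(t) < sinh^{m+1} t` for `t > 0`: the function `sinh^{m+1}/cosh − m I_m` vanishes
at `0` and has derivative `sinh^m / cosh² > 0`. It yields `c I_m ≤ m I_m < sinh^m`, so `M, P > 0`,
and it is exactly the positivity of the numerator of `(I_m / sinh^m)'`. Hence
`R = c I_m / sinh^m` increases strictly inside `[0, 1)`, so does `Q = R / √(1 - R²)`, and the
height function, whose derivative is `Q`, is strictly convex.
-/

open Real Set

lemma hasDerivAt_Ifun (m : ℕ) (t : ℝ) : HasDerivAt (Ifun m) (sinh t ^ m) t := by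
  have hc : Continuous fun r => sinh r ^ m := by fun_prop
  exact intervalIntegral.integral_hasDerivAt_right (hc.intervalIntegrable 0 t)
    hc.stronglyMeasurable.stronglyMeasurableAtFilter hc.continuousAt

@[fun_prop]
lemma continuous_Ifun (m : ℕ) : Continuous (Ifun m) :=
  continuous_iff_continuousAt.2 fun t => (hasDerivAt_Ifun m t).continuousAt

lemma Ifun_zero (m : ℕ) : Ifun m 0 = 0 := intervalIntegral.integral_same

lemma Ifun_nonneg (m : ℕ) {t : ℝ} (ht : 0 ≤ t) : 0 ≤ Ifun m t :=
  intervalIntegral.integral_nonneg ht fun _ hr => pow_nonneg (sinh_nonneg_iff.2 hr.1) m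

lemma pos_of_hasDerivAt_of_zero {f f' : ℝ → ℝ} (hf : ∀ x, HasDerivAt f (f' x) x)
    (hf' : ∀ x, 0 < x → 0 < f' x) (h0 : f 0 = 0) {t : ℝ} (ht : 0 < t) : 0 < f t := by
  have hmono : StrictMonoOn f (Ici 0) :=
    strictMonoOn_of_hasDerivWithinAt_pos (convex_Ici 0)
      (fun x _ => (hf x).continuousAt.continuousWithinAt)
      (fun x _ => (hf x).hasDerivWithinAt) (fun x hx => hf' x (by simpa using hx))
  simpa [h0] using hmono self_mem_Ici ht.le ht

lemma mul_cosh_mul_Ifun_lt_sinh_pow_succ (m : ℕ) {t : ℝ} (ht : 0 < t) :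
    m * cosh t * Ifun m t < sinh t ^ (m + 1) := by
  have hderiv (x : ℝ) : HasDerivAt (fun x => sinh x ^ (m + 1) / cosh x - m * Ifun m x)
      (sinh x ^ m / cosh x ^ 2) x := by
    have := (((hasDerivAt_sinh x).fun_pow (m + 1)).fun_div (hasDerivAt_cosh x)
      (cosh_pos x).ne').fun_sub ((hasDerivAt_Ifun m x).const_mul (m : ℝ))
    refine this.congr_deriv ?_
    have hc := (cosh_pos x).ne'
    simp only [add_tsub_cancel_right, Nat.cast_add, Nat.cast_one]
    field_simp
    linear_combination sinh x ^ m * cosh_sq x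
  have key := pos_of_hasDerivAt_of_zero hderiv
    (fun x hx => by have := sinh_pos_iff.2 hx; positivity) (by simp [Ifun_zero]) ht
  have hc := cosh_pos t
  rw [sub_pos, lt_div_iff₀ hc] at key
  linarith

lemma mul_Ifun_lt_sinh_pow (m : ℕ) {t : ℝ} (ht : 0 < t) : m * Ifun m t < sinh t ^ m := by
  have hs := sinh_pos_iff.2 ht
  have hc := cosh_pos t
  have h : cosh t * (m * Ifun m t) < cosh t * sinh t ^ m :=
    calc cosh t * (m * Ifun m t) = m * cosh t * Ifun m t := by ring
      _ < sinh t ^ (m + 1) := mul_cosh_mul_Ifun_lt_sinh_pow_succ m ht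
      _ = sinh t * sinh t ^ m := pow_succ' _ _
      _ < cosh t * sinh t ^ m := by gcongr; exact sinh_lt_cosh t
  exact lt_of_mul_lt_mul_left h hc.le

lemma strictMonoOn_Ifun_div_sinh_pow (m : ℕ) :
    StrictMonoOn (fun t => Ifun m t / sinh t ^ m) (Ioi 0) := by
  have hderiv (x : ℝ) (hx : 0 < x) : HasDerivAt (fun t => Ifun m t / sinh t ^ m)
      ((sinh x ^ m * sinh x ^ m - Ifun m x * (m * sinh x ^ (m - 1) * cosh x)) / (sinh x ^ m) ^ 2)
      x :=
    (hasDerivAt_Ifun m x).fun_div ((hasDerivAt_sinh x).fun_pow m)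
      (pow_pos (sinh_pos_iff.2 hx) m).ne'
  refine strictMonoOn_of_deriv_pos (convex_Ioi 0)
    (fun x hx => (hderiv x hx).continuousAt.continuousWithinAt) fun x hx => ?_
  rw [interior_Ioi] at hx
  rw [(hderiv x hx).deriv]
  have hs := sinh_pos_iff.2 hx
  refine div_pos ?_ (by positivity)
  rcases m with _ | k
  · simp
  · have key := mul_cosh_mul_Ifun_lt_sinh_pow_succ (k + 1) hx
    have hnum : sinh x ^ (k + 1) * sinh x ^ (k + 1)
          - Ifun (k + 1) x * (↑(k + 1) * sinh x ^ (k + 1 - 1) * cosh x)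
        = sinh x ^ k * (sinh x ^ (k + 1 + 1) - ↑(k + 1) * cosh x * Ifun (k + 1) x) := by
      simp only [add_tsub_cancel_right]; ring
    rw [hnum]
    exact mul_pos (pow_pos hs k) (sub_pos.2 key)

lemma mul_Ifun_lt_sinh_pow_of_le (m : ℕ) {c t : ℝ} (hc : c ≤ m) (ht : 0 < t) :
    c * Ifun m t < sinh t ^ m :=
  (mul_le_mul_of_nonneg_right hc (Ifun_nonneg m ht.le)).trans_lt (mul_Ifun_lt_sinh_pow m ht)

lemma strictMonoOn_div_sqrt_one_sub_sq :
    StrictMonoOn (fun x : ℝ => x / √(1 - x ^ 2)) (Ico 0 1) := by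
  intro a ⟨ha0, _⟩ b ⟨_, hb1⟩ hab
  have hb : 0 < √(1 - b ^ 2) := sqrt_pos.2 (by nlinarith)
  calc a / √(1 - a ^ 2) ≤ a / √(1 - b ^ 2) :=
        div_le_div_of_nonneg_left ha0 hb (sqrt_le_sqrt (by nlinarith))
    _ < b / √(1 - b ^ 2) := by gcongr

lemma div_sqrt_sq_sub_sq {s : ℝ} (hs : 0 < s) (u : ℝ) :
    u / √(s ^ 2 - u ^ 2) = u / s / √(1 - (u / s) ^ 2) := by
  have h : s ^ 2 - u ^ 2 = (s * s) * (1 - (u / s) ^ 2) := by field_simp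
  rw [h, sqrt_mul (mul_self_nonneg s), sqrt_mul_self hs.le, div_div]

lemma strictConvexOn_integral_of_strictMonoOn {f : ℝ → ℝ} {a : ℝ} (hmono : MonotoneOn f (Ici a))
    (hstrict : StrictMonoOn f (Ioi a)) (hcont : ContinuousOn f (Ioi a)) :
    StrictConvexOn ℝ (Ioi a) (fun x => ∫ t in a..x, f t) := by
  have hderiv (x : ℝ) (hx : a < x) : HasDerivAt (fun x => ∫ t in a..x, f t) (f x) x :=
    intervalIntegral.integral_hasDerivAt_right
      (hmono.mono (by simp [uIcc_of_le hx.le, Icc_subset_Ici_self])).intervalIntegrable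
      (hcont.stronglyMeasurableAtFilter isOpen_Ioi x hx)
      (hcont.continuousAt (Ioi_mem_nhds hx))
  refine StrictMonoOn.strictConvexOn_of_deriv (convex_Ioi a)
    (fun x hx => (hderiv x hx).continuousAt.continuousWithinAt) ?_
  rw [interior_Ioi]
  exact hstrict.congr fun x hx => ((hderiv x hx).deriv).symm

section

variable {n : ℕ} {H : ℝ}

lemma Mfun_zero_pos (hH : n * H ≤ (n - 1 : ℕ)) {t : ℝ} (ht : 0 < t) : 0 < Mfun n H 0 t := by
  have := mul_Ifun_lt_sinh_pow_of_le (n - 1) hH ht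
  unfold Mfun
  linarith

lemma Pfun_zero_pos (hH : 0 ≤ H) {t : ℝ} (ht : 0 < t) : 0 < Pfun n H 0 t := by
  have := mul_nonneg (mul_nonneg n.cast_nonneg hH) (Ifun_nonneg (n - 1) ht.le)
  have := pow_pos (sinh_pos_iff.2 ht) (n - 1)
  unfold Pfun
  linarith

lemma continuousOn_Qfun {d : ℝ} {s : Set ℝ} (h : ∀ t ∈ s, 0 < Mfun n H d t * Pfun n H d t) :
    ContinuousOn (Qfun n H d) s := by
  refine ContinuousOn.div (by fun_prop) (by unfold Mfun Pfun; fun_prop) ?_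
  exact fun t ht => (sqrt_pos.2 (h t ht)).ne'

lemma Qfun_zero_eq {t : ℝ} (ht : 0 < t) :
    Qfun n H 0 t = n * H * (Ifun (n - 1) t / sinh t ^ (n - 1))
      / √(1 - (n * H * (Ifun (n - 1) t / sinh t ^ (n - 1))) ^ 2) := by
  have hMP : Mfun n H 0 t * Pfun n H 0 t
      = (sinh t ^ (n - 1)) ^ 2 - (n * H * Ifun (n - 1) t) ^ 2 := by
    unfold Mfun Pfun; ring
  rw [Qfun, hMP, add_zero, div_sqrt_sq_sub_sq (pow_pos (sinh_pos_iff.2 ht) _), mul_div_assoc]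

lemma strictMonoOn_Qfun_zero (hn : 0 < n) (hH0 : 0 < H) (hH1 : n * H ≤ (n - 1 : ℕ)) :
    StrictMonoOn (Qfun n H 0) (Ioi 0) := by
  have hmaps :
      MapsTo (fun t => n * H * (Ifun (n - 1) t / sinh t ^ (n - 1))) (Ioi 0) (Ico 0 1) := by
    intro t ht
    have hs := pow_pos (sinh_pos_iff.2 ht) (n - 1)
    dsimp only
    rw [mem_Ico, ← mul_div_assoc]
    exact ⟨by have := Ifun_nonneg (n - 1) ht.le; positivity,
      (div_lt_one hs).2 (mul_Ifun_lt_sinh_pow_of_le (n - 1) hH1 ht)⟩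
  exact (strictMonoOn_div_sqrt_one_sub_sq.comp
    ((strictMono_mul_left_of_pos (by positivity)).comp_strictMonoOn
      (strictMonoOn_Ifun_div_sinh_pow (n - 1))) hmaps).congr
    fun t ht => (Qfun_zero_eq ht).symm

lemma monotoneOn_Qfun_zero (hn : 0 < n) (hH0 : 0 < H) (hH1 : n * H ≤ (n - 1 : ℕ)) :
    MonotoneOn (Qfun n H 0) (Ici 0) := by
  intro x hx y hy hxy
  rcases (mem_Ici.1 hx).eq_or_lt with rfl | hx
  · have := Ifun_nonneg (n - 1) hy
    simp only [Qfun, Ifun_zero, mul_zero, add_zero, zero_div]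
    positivity
  · exact (strictMonoOn_Qfun_zero hn hH0 hH1).monotoneOn hx (hx.trans_le hxy) hxy

end

/-- Let `n ≥ 2` and `0 < H ≤ (n-1)/n`. Then `M_{H,0}(t) > 0` and `P_{H,0}(t) > 0` for all
`t > 0`, `Q_{H,0}` is strictly increasing on `(0,∞)`; equivalently, the height function
`λ(ρ) := ∫₀^{ρ} Q_{H,0}(t) dt` is strictly convex on `(0,∞)`. -/
theorem stmt12 (n : ℕ) (hn : 2 ≤ n) (H : ℝ) (hH0 : 0 < H) (hH1 : H ≤ ((n : ℝ) - 1) / n) :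
    (∀ t : ℝ, 0 < t → 0 < Mfun n H 0 t ∧ 0 < Pfun n H 0 t) ∧
    StrictMonoOn (Qfun n H 0) (Set.Ioi 0) ∧
    StrictConvexOn ℝ (Set.Ioi 0) (fun ρ : ℝ => ∫ t in (0:ℝ)..ρ, Qfun n H 0 t) := by
  have hn0 : 0 < n := by omega
  have hH : n * H ≤ (n - 1 : ℕ) := by
    rw [Nat.cast_sub hn0, Nat.cast_one, ← le_div_iff₀' (by positivity)]
    exact hH1
  have hMP (t : ℝ) (ht : 0 < t) : 0 < Mfun n H 0 t ∧ 0 < Pfun n H 0 t :=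
    ⟨Mfun_zero_pos hH ht, Pfun_zero_pos hH0.le ht⟩
  refine ⟨hMP, strictMonoOn_Qfun_zero hn0 hH0 hH, ?_⟩
  exact strictConvexOn_integral_of_strictMonoOn (monotoneOn_Qfun_zero hn0 hH0 hH)
    (strictMonoOn_Qfun_zero hn0 hH0 hH)
    (continuousOn_Qfun fun t ht => mul_pos (hMP t ht).1 (hMP t ht).2)
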